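/- If (w, c, α²) is a non-trivial solution of the Taylor–Goldstein eigenvalue problem with c_i > 0, then the integral relation ∫_{z₁}^{z₂} (|w″|² + α²|w′|²) dz − α² ∫_{z₁}^{z₂} U″(U − c_r)/((U − c_r)² + c_i²) |w|² dz + α² ∫_{z₁}^{z₂} gβ((U − c_r)² − c_i²)/((U − c_r)² + c_i²)² |w|² dz − ∫_{z₁}^{z₂} (U″)²/((U − c_r)² + c_i²) |w|² dz + 2 ∫_{z₁}^{z₂} gβ U″ (U − c_r)/((U − c_r)² + c_i²)² |w|² dz − ∫_{z₁}^{z₂} g²β²/((U − c_r)² + c_i²)² |w|² dz = 0 holds (Lemma 3.2, relation (3.7)). -/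

import Mathlib

/-!
Write the equation as `w'' = (α² + Q) w` with `Q = U''/(U - c) - gβ/(U - c)²`. Multiplying by
`conj w''` gives `|w''|² = α² Re (conj w · w'') + (α² Re Q + |Q|²) |w|²` pointwise, and integration
by parts with `w = 0` at both ends turns `∫ conj w · w''` into `-∫ |w'|²`. Hence
`∫ |w''|² + α² |w'|² = α² ∫ Re Q |w|² + ∫ |Q|² |w|²`, and expanding `Re Q` and `|Q|²` with
`|U - c|² = (U - c_r)² + c_i²` gives the relation.
-/

open Set MeasureTheory ComplexConjugate

namespace Complex

theorem sq_norm_eq_of_eq_add_mul (k : ℝ) {q v v'' : ℂ} (h : v'' = (k + q) * v) :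
    ‖v''‖ ^ 2 = k * (conj v * v'').re + (k * q.re + ‖q‖ ^ 2) * ‖v‖ ^ 2 := by
  subst h
  simp only [Complex.sq_norm, normSq_apply, mul_re, mul_im, add_re, add_im, ofReal_re, ofReal_im,
    conj_re, conj_im]
  ring

theorem re_div_sub_div_sq (t u : ℝ) (s : ℂ) :
    ((t : ℂ) / s - u / s ^ 2).re
      = t * s.re / normSq s - u * (s.re ^ 2 - s.im ^ 2) / normSq s ^ 2 := by
  simp only [sub_re, div_re, map_pow]
  simp only [pow_two, mul_re, mul_im, ofReal_re, ofReal_im]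
  ring

theorem sq_norm_div_sub_div_sq (t u : ℝ) {s : ℂ} (hs : s ≠ 0) :
    ‖(t : ℂ) / s - u / s ^ 2‖ ^ 2
      = t ^ 2 / normSq s - 2 * (u * t * s.re / normSq s ^ 2) + u ^ 2 / normSq s ^ 2 := by
  have : normSq s ≠ 0 := (normSq_pos.2 hs).ne'
  rw [Complex.sq_norm, normSq_apply (_ - _)]
  simp only [sub_re, sub_im, div_re, div_im, map_pow]
  simp only [pow_two, mul_re, mul_im, ofReal_re, ofReal_im]
  field_simp
  rw [normSq_apply]
  ring

theorem normSq_ofReal_sub (x : ℝ) (c : ℂ) : normSq (x - c) = (x - c.re) ^ 2 + c.im ^ 2 := by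
  simp [normSq_apply]
  ring

theorem ofReal_sub_ne_zero {c : ℂ} (hc : c.im ≠ 0) (x : ℝ) : (x : ℂ) - c ≠ 0 := fun h => by
  simpa [hc] using congrArg im h

end Complex

namespace intervalIntegral

variable {a b : ℝ}

theorem integral_re_conj_mul_deriv_deriv {w w' w'' : ℝ → ℂ}
    (hw : ∀ x ∈ uIcc a b, HasDerivAt w (w' x) x) (hw' : ∀ x ∈ uIcc a b, HasDerivAt w' (w'' x) x)
    (hw'' : IntervalIntegrable w'' volume a b) (ha : w a = 0) (hb : w b = 0) :
    ∫ x in a..b, (conj (w x) * w'' x).re = -∫ x in a..b, ‖w' x‖ ^ 2 := by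
  have hwc : ContinuousOn (fun x => conj (w x)) (uIcc a b) := fun x hx =>
    (hw x hx).continuousAt.star.continuousWithinAt
  have hw'c : ContinuousOn (fun x => conj (w' x)) (uIcc a b) := fun x hx =>
    (hw' x hx).continuousAt.star.continuousWithinAt
  have ibp : ∫ x in a..b, conj (w x) * w'' x = -∫ x in a..b, conj (w' x) * w' x := by
    simpa [ha, hb] using integral_mul_deriv_eq_deriv_mul
      (fun x hx => (hw x hx).star) hw' hw'c.intervalIntegrable hw''
  have hre := intervalIntegral_re (hw''.continuousOn_mul hwc)
  simp only [RCLike.re_to_complex] at hre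
  have hconj : ∀ x, conj (w' x) * w' x = ((‖w' x‖ ^ 2 : ℝ) : ℂ) := fun x => by
    push_cast; exact Complex.conj_mul' _
  rw [hre, ibp]
  simp only [hconj, integral_ofReal, Complex.neg_re, Complex.ofReal_re]

theorem integral_sq_norm_deriv2_add_mul_sq_norm_deriv {k : ℝ}
    {q w w' w'' : ℝ → ℂ} (hq : ContinuousOn q (uIcc a b))
    (hw : ∀ x ∈ uIcc a b, HasDerivAt w (w' x) x) (hw' : ∀ x ∈ uIcc a b, HasDerivAt w' (w'' x) x)
    (ha : w a = 0) (hb : w b = 0) (hode : ∀ x ∈ uIcc a b, w'' x = (k + q x) * w x) :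
    ∫ x in a..b, (‖w'' x‖ ^ 2 + k * ‖w' x‖ ^ 2)
      = k * (∫ x in a..b, (q x).re * ‖w x‖ ^ 2) + ∫ x in a..b, ‖q x‖ ^ 2 * ‖w x‖ ^ 2 := by
  have hwc : ContinuousOn w (uIcc a b) := fun x hx => (hw x hx).continuousAt.continuousWithinAt
  have hw'c : ContinuousOn w' (uIcc a b) := fun x hx => (hw' x hx).continuousAt.continuousWithinAt
  have hw''c : ContinuousOn w'' (uIcc a b) := ((continuousOn_const.add hq).mul hwc).congr hode
  have hpt : ∀ x ∈ uIcc a b, ‖w'' x‖ ^ 2 + k * ‖w' x‖ ^ 2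
      = k * ((conj (w x) * w'' x).re + ‖w' x‖ ^ 2)
        + (k * ((q x).re * ‖w x‖ ^ 2) + ‖q x‖ ^ 2 * ‖w x‖ ^ 2) := fun x hx => by
    rw [Complex.sq_norm_eq_of_eq_add_mul k (hode x hx)]
    ring
  have i₁ : IntervalIntegrable (fun x => (conj (w x) * w'' x).re) volume a b :=
    ContinuousOn.intervalIntegrable (by fun_prop)
  have i₂ : IntervalIntegrable (fun x => ‖w' x‖ ^ 2) volume a b :=
    ContinuousOn.intervalIntegrable (by fun_prop)
  have i₃ : IntervalIntegrable (fun x => (q x).re * ‖w x‖ ^ 2) volume a b :=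
    ContinuousOn.intervalIntegrable (by fun_prop)
  have i₄ : IntervalIntegrable (fun x => ‖q x‖ ^ 2 * ‖w x‖ ^ 2) volume a b :=
    ContinuousOn.intervalIntegrable (by fun_prop)
  rw [integral_congr hpt, integral_add ((i₁.add i₂).const_mul k) ((i₃.const_mul k).add i₄),
    integral_add (i₃.const_mul k) i₄, integral_const_mul, integral_const_mul, integral_add i₁ i₂,
    integral_re_conj_mul_deriv_deriv hw hw' hw''c.intervalIntegrable ha hb]
  ring

section

variable {V t u f : ℝ → ℝ} {c : ℂ}

theorem integral_re_div_sub_div_sq_mul (hc : c.im ≠ 0)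
    (hV : ContinuousOn V (uIcc a b)) (ht : ContinuousOn t (uIcc a b))
    (hu : ContinuousOn u (uIcc a b)) (hf : ContinuousOn f (uIcc a b)) :
    ∫ x in a..b, ((t x : ℂ) / (V x - c) - u x / (V x - c) ^ 2).re * f x
      = (∫ x in a..b, t x * (V x - c.re) / ((V x - c.re) ^ 2 + c.im ^ 2) * f x)
        - ∫ x in a..b, u x * ((V x - c.re) ^ 2 - c.im ^ 2)
            / ((V x - c.re) ^ 2 + c.im ^ 2) ^ 2 * f x := by
  rw [← integral_sub (ContinuousOn.intervalIntegrable (by fun_prop (disch := intros; positivity)))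
    (ContinuousOn.intervalIntegrable (by fun_prop (disch := intros; positivity)))]
  refine integral_congr fun x _ => ?_
  rw [Complex.re_div_sub_div_sq, Complex.normSq_ofReal_sub]
  simp only [Complex.sub_re, Complex.sub_im, Complex.ofReal_re, Complex.ofReal_im]
  ring

theorem integral_sq_norm_div_sub_div_sq_mul (hc : c.im ≠ 0)
    (hV : ContinuousOn V (uIcc a b)) (ht : ContinuousOn t (uIcc a b))
    (hu : ContinuousOn u (uIcc a b)) (hf : ContinuousOn f (uIcc a b)) :
    ∫ x in a..b, ‖(t x : ℂ) / (V x - c) - u x / (V x - c) ^ 2‖ ^ 2 * f x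
      = (∫ x in a..b, t x ^ 2 / ((V x - c.re) ^ 2 + c.im ^ 2) * f x)
        - 2 * (∫ x in a..b, u x * t x * (V x - c.re) / ((V x - c.re) ^ 2 + c.im ^ 2) ^ 2 * f x)
        + ∫ x in a..b, u x ^ 2 / ((V x - c.re) ^ 2 + c.im ^ 2) ^ 2 * f x := by
  rw [← integral_const_mul, ← integral_sub, ← integral_add]
  · refine integral_congr fun x _ => ?_
    simp only [Complex.sq_norm_div_sub_div_sq _ _ (Complex.ofReal_sub_ne_zero hc _),
      Complex.normSq_ofReal_sub, Complex.sub_re, Complex.ofReal_re]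
    ring
  all_goals exact ContinuousOn.intervalIntegrable (by fun_prop (disch := intros; positivity))

end

end intervalIntegral

theorem taylor_goldstein_relation_3_7_general
    (z₁ z₂ : ℝ) (hz : z₁ < z₂)
    (g : ℝ)
    (U U' U'' : ℝ → ℝ)
    (hU : ∀ z ∈ Icc z₁ z₂, HasDerivAt U (U' z) z)
    (hU'' : ContinuousOn U'' (Icc z₁ z₂))
    (β : ℝ → ℝ) (hβc : ContinuousOn β (Icc z₁ z₂))
    (α : ℝ)
    (c : ℂ) (hci : 0 < c.im)
    (w w' w'' : ℝ → ℂ)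
    (hw : ∀ z ∈ Icc z₁ z₂, HasDerivAt w (w' z) z)
    (hw' : ∀ z ∈ Icc z₁ z₂, HasDerivAt w' (w'' z) z)
    (hbc₁ : w z₁ = 0) (hbc₂ : w z₂ = 0)
    (heq : ∀ z ∈ Icc z₁ z₂,
      w'' z - (α : ℂ) ^ 2 * w z - ((U'' z : ℂ) / ((U z : ℂ) - c)) * w z
        + ((g : ℂ) * (β z : ℂ) / ((U z : ℂ) - c) ^ 2) * w z = 0) :
    (∫ z in z₁..z₂, (‖w'' z‖ ^ 2 + α ^ 2 * ‖w' z‖ ^ 2))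
      - α ^ 2 * (∫ z in z₁..z₂,
          U'' z * (U z - c.re) / ((U z - c.re) ^ 2 + c.im ^ 2) * ‖w z‖ ^ 2)
      + α ^ 2 * (∫ z in z₁..z₂,
          g * β z * ((U z - c.re) ^ 2 - c.im ^ 2)
            / ((U z - c.re) ^ 2 + c.im ^ 2) ^ 2 * ‖w z‖ ^ 2)
      - (∫ z in z₁..z₂,
          (U'' z) ^ 2 / ((U z - c.re) ^ 2 + c.im ^ 2) * ‖w z‖ ^ 2)
      + 2 * (∫ z in z₁..z₂,
          g * β z * U'' z * (U z - c.re)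
            / ((U z - c.re) ^ 2 + c.im ^ 2) ^ 2 * ‖w z‖ ^ 2)
      - (∫ z in z₁..z₂,
          g ^ 2 * (β z) ^ 2 / ((U z - c.re) ^ 2 + c.im ^ 2) ^ 2 * ‖w z‖ ^ 2)
      = 0 := by
  rw [← uIcc_of_le hz.le] at hU hU'' hβc hw hw' heq
  set q : ℝ → ℂ := fun z => (U'' z : ℂ) / (U z - c) - ((g * β z : ℝ) : ℂ) / (U z - c) ^ 2
  have hUc : ContinuousOn U (uIcc z₁ z₂) := fun z hz' => (hU z hz').continuousAt.continuousWithinAt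
  have hwc : ContinuousOn w (uIcc z₁ z₂) := fun z hz' => (hw z hz').continuousAt.continuousWithinAt
  have hq : ContinuousOn q (uIcc z₁ z₂) := by
    fun_prop (disch := intros; simp [Complex.ofReal_sub_ne_zero hci.ne'])
  have hode : ∀ z ∈ uIcc z₁ z₂, w'' z = ((α ^ 2 : ℝ) + q z) * w z := fun z hz' => by
    simp only [q]
    push_cast
    linear_combination heq z hz'
  have energy :=
    intervalIntegral.integral_sq_norm_deriv2_add_mul_sq_norm_deriv hq hw hw' hbc₁ hbc₂ hode
  rw [intervalIntegral.integral_re_div_sub_div_sq_mul hci.ne' hUc hU'' (by fun_prop) (by fun_prop),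
    intervalIntegral.integral_sq_norm_div_sub_div_sq_mul hci.ne' hUc hU'' (by fun_prop)
      (by fun_prop)] at energy
  simp only [mul_pow] at energy
  linarith

/-- Lemma 3.2, relation (3.7). -/
theorem taylor_goldstein_relation_3_7
    (z₁ z₂ : ℝ) (hz : z₁ < z₂)
    (g : ℝ) (hg : 0 < g)
    (U U' U'' : ℝ → ℝ)
    (hU : ∀ z ∈ Icc z₁ z₂, HasDerivAt U (U' z) z)
    (hU' : ∀ z ∈ Icc z₁ z₂, HasDerivAt U' (U'' z) z)
    (hU'' : ContinuousOn U'' (Icc z₁ z₂))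
    (β : ℝ → ℝ) (hβc : ContinuousOn β (Icc z₁ z₂))
    (hβ : ∀ z ∈ Icc z₁ z₂, 0 ≤ β z)
    (α : ℝ) (hα : 0 < α)
    (c : ℂ) (hci : 0 < c.im)
    (w w' w'' : ℝ → ℂ)
    (hw : ∀ z ∈ Icc z₁ z₂, HasDerivAt w (w' z) z)
    (hw' : ∀ z ∈ Icc z₁ z₂, HasDerivAt w' (w'' z) z)
    (hw'' : ContinuousOn w'' (Icc z₁ z₂))
    (hw0 : ∃ z ∈ Icc z₁ z₂, w z ≠ 0)
    (hbc₁ : w z₁ = 0) (hbc₂ : w z₂ = 0)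
    (heq : ∀ z ∈ Icc z₁ z₂,
      w'' z - (α : ℂ) ^ 2 * w z - ((U'' z : ℂ) / ((U z : ℂ) - c)) * w z
        + ((g : ℂ) * (β z : ℂ) / ((U z : ℂ) - c) ^ 2) * w z = 0) :
    (∫ z in z₁..z₂, (‖w'' z‖ ^ 2 + α ^ 2 * ‖w' z‖ ^ 2))
      - α ^ 2 * (∫ z in z₁..z₂,
          U'' z * (U z - c.re) / ((U z - c.re) ^ 2 + c.im ^ 2) * ‖w z‖ ^ 2)
      + α ^ 2 * (∫ z in z₁..z₂,
          g * β z * ((U z - c.re) ^ 2 - c.im ^ 2)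
            / ((U z - c.re) ^ 2 + c.im ^ 2) ^ 2 * ‖w z‖ ^ 2)
      - (∫ z in z₁..z₂,
          (U'' z) ^ 2 / ((U z - c.re) ^ 2 + c.im ^ 2) * ‖w z‖ ^ 2)
      + 2 * (∫ z in z₁..z₂,
          g * β z * U'' z * (U z - c.re)
            / ((U z - c.re) ^ 2 + c.im ^ 2) ^ 2 * ‖w z‖ ^ 2)
      - (∫ z in z₁..z₂,
          g ^ 2 * (β z) ^ 2 / ((U z - c.re) ^ 2 + c.im ^ 2) ^ 2 * ‖w z‖ ^ 2)
      = 0 :=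
  taylor_goldstein_relation_3_7_general z₁ z₂ hz g U U' U'' hU hU'' β hβc α c hci w w' w'' hw hw'
    hbc₁ hbc₂ heq
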